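/- arXiv:2104.00524 — 3 statements merged into one kernel-verified Lean document; each statement's English description precedes it below -/
import Mathlib

section
/- For every positive integer p, Σ_{k=1}^{p} (−1)^{k−1} · (2p)!/(2p+1−2k)! · η(2k)/π^{2k} = 1/(2(2p+1)), where η is the Dirichlet eta function η(s) = Σ_{n≥1} (−1)^{n−1}/n^s. -/
open scoped BigOperators
open Real

noncomputable def zetaR (s : ℕ) : ℝ := ∑' n : ℕ, 1 / ((n : ℝ) + 1) ^ s
noncomputable def etaR (s : ℕ) : ℝ := ∑' n : ℕ, (-1 : ℝ) ^ n / ((n : ℝ) + 1) ^ s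
noncomputable def betaR (s : ℕ) : ℝ := ∑' m : ℕ, (-1 : ℝ) ^ m / (2 * (m : ℝ) + 1) ^ s

/-!
Evaluating the Fourier series `∑ cos (2πnx) / n^(2k)` at `x = 1/2`, where
`B_{2k}(1/2) = (2^(1-2k) - 1) B_{2k}`, gives
`η(2k) = (-1)^(k+1) (2^(2k) - 2) π^(2k) B_{2k} / (2 (2k)!)`.
The `k`-th summand is then `C(2p+1, 2k) (2^(2k) - 2) B_{2k} / (2 (2p+1))`, so the claim becomes
`∑_{k=1}^p C(2p+1, 2k) (2^(2k) - 2) B_{2k} = 1`. Evaluating `B_n(x) = ∑_j C(n,j) B_j x^(n-j)` at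
`x = 1/2` and `x = 1` gives `∑_j C(n,j) (2^j - 2) B_j = 2^n B_n(1/2) - 2 B_n(1)`, which vanishes
for odd `n ≥ 3`; on the left the odd-index terms vanish (`j = 1` because `2^1 - 2 = 0`) and the
`j = 0` term is `-1`.
-/

open Finset Nat

theorem Finset.sum_range_two_mul {M : Type*} [AddCommMonoid M] (f : ℕ → M) (m : ℕ) :
    ∑ j ∈ range (2 * m), f j = ∑ k ∈ range m, (f (2 * k) + f (2 * k + 1)) := by
  induction m with
  | zero => simp
  | succ m ih => rw [mul_add_one, sum_range_succ, sum_range_succ, sum_range_succ, ih, add_assoc]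

theorem sum_choose_mul_two_pow_sub_two_mul_bernoulli (n : ℕ) :
    ∑ j ∈ range (n + 1), (n.choose j : ℚ) * (2 ^ j - 2) * bernoulli j
      = 2 ^ n * (Polynomial.bernoulli n).eval 2⁻¹ - 2 * (Polynomial.bernoulli n).eval 1 := by
  simp only [Polynomial.bernoulli, Polynomial.eval_finsetSum, Polynomial.eval_monomial, one_pow,
    mul_one, mul_sum, ← sum_sub_distrib]
  refine sum_congr rfl fun j hj => ?_
  have hpow : (2 : ℚ) ^ n * 2⁻¹ ^ (n - j) = 2 ^ j := by
    rw [inv_pow, ← div_eq_mul_inv, div_eq_iff (by positivity), ← pow_add,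
      Nat.add_sub_cancel' (Nat.lt_succ_iff.mp (mem_range.mp hj))]
  linear_combination (bernoulli j * n.choose j) * hpow.symm

theorem sum_Icc_choose_mul_two_pow_sub_two_mul_bernoulli {p : ℕ} (hp : 0 < p) :
    ∑ k ∈ Icc 1 p, ((2 * p + 1).choose (2 * k) : ℚ) * (2 ^ (2 * k) - 2) * bernoulli (2 * k)
      = 1 := by
  have h := sum_choose_mul_two_pow_sub_two_mul_bernoulli (2 * p + 1)
  have hhalf : (Polynomial.bernoulli (2 * p + 1)).eval 2⁻¹ = 0 := by
    have := Polynomial.bernoulli_eval_one_sub (2 * p + 1) 2⁻¹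
    rw [(by norm_num : (1 : ℚ) - 2⁻¹ = 2⁻¹), (odd_two_mul_add_one p).neg_one_pow] at this
    linarith
  have hodd : ∀ k ∈ range (p + 1),
      ((2 * p + 1).choose (2 * k + 1) : ℚ) * (2 ^ (2 * k + 1) - 2) * bernoulli (2 * k + 1)
        = 0 := by
    intro k _
    rcases k.eq_zero_or_pos with rfl | hk
    · norm_num
    · rw [bernoulli_eq_zero_of_odd (odd_two_mul_add_one k) (by omega), mul_zero]
  rw [hhalf, Polynomial.bernoulli_eval_one,
    bernoulli'_eq_zero_of_odd (odd_two_mul_add_one p) (by omega),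
    show 2 * p + 1 + 1 = 2 * (p + 1) by ring, sum_range_two_mul, sum_add_distrib,
    sum_eq_zero hodd, range_eq_Ico, sum_eq_sum_Ico_succ_bot (succ_pos p),
    zero_add, Nat.succ_eq_add_one, Ico_add_one_right_eq_Icc] at h
  norm_num at h
  linarith

theorem hasSum_eta_two_mul {k : ℕ} (hk : k ≠ 0) :
    HasSum (fun n : ℕ => (-1 : ℝ) ^ n / ((n : ℝ) + 1) ^ (2 * k))
      ((-1) ^ (k + 1) * (2 ^ (2 * k) - 2) * π ^ (2 * k) * bernoulli (2 * k) / (2 * (2 * k)!)) := by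
  have h := hasSum_one_div_nat_pow_mul_cos hk (x := 2⁻¹) ⟨by norm_num, by norm_num⟩
  have hcos (n : ℕ) : Real.cos (2 * π * n * 2⁻¹) = (-1) ^ n := by
    rw [← cos_nat_mul_pi]; ring_nf
  simp only [hcos] at h
  -- shift the index by one; the dropped `n = 0` term is the junk value `1 / 0 ^ (2k) = 0`
  rw [← hasSum_nat_add_iff' 1] at h
  rw [← bernoulliFun, bernoulliFun_eval_half, sum_range_one, Nat.cast_zero,
    zero_pow (by omega), div_zero, zero_mul, sub_zero] at h
  have hterm : (fun n : ℕ => (-1 : ℝ) ^ n / ((n : ℝ) + 1) ^ (2 * k))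
      = fun n => -(1 / ((n + 1 : ℕ) : ℝ) ^ (2 * k) * (-1) ^ (n + 1)) := by
    ext n; push_cast; ring
  have hval : (-1) ^ (k + 1) * (2 ^ (2 * k) - 2) * π ^ (2 * k) * bernoulli (2 * k) / (2 * (2 * k)!)
      = -((-1) ^ (k + 1) * (2 * π) ^ (2 * k) / 2 / (2 * k)! *
          ((2 / 2 ^ (2 * k) - 1) * bernoulli (2 * k))) := by
    rw [mul_pow]
    field_simp
    ring
  rw [hterm, hval]
  exact h.neg

theorem etaR_two_mul {k : ℕ} (hk : k ≠ 0) :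
    etaR (2 * k)
      = (-1) ^ (k + 1) * (2 ^ (2 * k) - 2) * π ^ (2 * k) * bernoulli (2 * k) / (2 * (2 * k)!) :=
  (hasSum_eta_two_mul hk).tsum_eq

theorem cast_factorial_div_factorial_eq_choose {K : Type*} [Field K] [CharZero K] {n m : ℕ}
    (h : m ≤ n + 1) : (n ! : K) / (n + 1 - m)! = (n + 1).choose m * m ! / (n + 1) := by
  rw [Nat.cast_choose K h, Nat.factorial_succ]
  push_cast
  field_simp
  rw [mul_div_mul_right _ _ (Nat.cast_ne_zero.mpr m.factorial_ne_zero)]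

theorem eta_summand_eq_choose_mul_bernoulli {n k : ℕ} (hk : k ≠ 0) (hkn : 2 * k ≤ n + 1) :
    (-1 : ℝ) ^ (k - 1) * ((n ! : ℝ) / (n + 1 - 2 * k)!) * (etaR (2 * k) / π ^ (2 * k))
      = (n + 1).choose (2 * k) * (2 ^ (2 * k) - 2) * bernoulli (2 * k) / (2 * (n + 1)) := by
  have hsign : (-1 : ℝ) ^ (k - 1) * (-1) ^ (k + 1) = 1 := by
    rw [← pow_add, show k - 1 + (k + 1) = 2 * k by omega, pow_mul, neg_one_sq, one_pow]
  rw [etaR_two_mul hk, cast_factorial_div_factorial_eq_choose hkn]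
  calc _ = ((-1 : ℝ) ^ (k - 1) * (-1) ^ (k + 1)) *
        ((n + 1).choose (2 * k) * (2 ^ (2 * k) - 2) * bernoulli (2 * k) / (2 * (n + 1))) := by
        field_simp
    _ = _ := by rw [hsign, one_mul]

theorem stmt1 (p : ℕ) (hp : 0 < p) :
    ∑ k ∈ Finset.Icc 1 p, (-1 : ℝ) ^ (k - 1) *
        (((2 * p).factorial : ℝ) / ((2 * p + 1 - 2 * k).factorial : ℝ)) *
        (etaR (2 * k) / π ^ (2 * k))
      = 1 / (2 * (2 * (p : ℝ) + 1)) := by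
  have hbern : ∑ k ∈ Icc 1 p, ((2 * p + 1).choose (2 * k) : ℝ) * (2 ^ (2 * k) - 2) *
      bernoulli (2 * k) = 1 := by
    exact_mod_cast sum_Icc_choose_mul_two_pow_sub_two_mul_bernoulli hp
  rw [sum_congr rfl fun k hk => eta_summand_eq_choose_mul_bernoulli (by grind) (by grind),
    ← sum_div]
  push_cast
  rw [hbern]
end

section
/- For every positive integer p ≥ 2, the quantity A_p := η(2p)/π^{2p} satisfies the recurrence A_p = ((−1)^{p−1}/(2p)!) · ( 1/(2(2p+1)) − Σ_{k=1}^{p−1} (−1)^{k−1} · (2p)!/(2p+1−2k)! · A_k ), with A_1 = 1/12. -/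
/-!
Splitting the alternating series into even and odd terms gives η(2k) = (1 - 2^{1-2k}) ζ(2k), so
Euler's formula for ζ(2k) yields A_k = (-1)^{k-1} (2^{2k} - 2) B_{2k} / (2 (2k)!). In these terms
the recurrence is the identity Σ_{k=1}^{p} C(2p+1, 2k) (2^{2k} - 2) B_{2k} = 1, which is the
coefficient of x^{2p+1} in B(2x) e^x = 2 B(x) - B(2x) for B(x) = x / (e^x - 1) (a consequence of
e^{2x} - 1 = (e^x - 1)(e^x + 1)), once the odd Bernoulli numbers beyond B_1 are discarded.
-/

open scoped BigOperators
open Real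

noncomputable def A (p : ℕ) : ℝ := etaR (2 * p) / π ^ (2 * p)

lemma hasSum_zetaR {s : ℕ} (hs : 2 ≤ s) :
    HasSum (fun n : ℕ => 1 / ((n : ℝ) + 1) ^ s) (zetaR s) := by
  have h : Summable (fun n : ℕ => 1 / ((n : ℝ) + 1) ^ s) := by
    exact_mod_cast (summable_nat_add_iff 1).mpr (Real.summable_one_div_nat_pow.mpr hs)
  exact h.hasSum

lemma etaR_eq_zetaR {s : ℕ} (hs : 2 ≤ s) : etaR s = (1 - 2 / 2 ^ s) * zetaR s := by
  set f : ℕ → ℝ := fun n => 1 / ((n : ℝ) + 1) ^ s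
  have hf : HasSum f (zetaR s) := hasSum_zetaR hs
  have hf_odd : ∀ m, f (2 * m + 1) = f m / 2 ^ s := fun m => by
    simp only [f]
    rw [div_div, ← mul_pow]
    push_cast
    ring_nf
  have hodd : HasSum (fun m => f (2 * m + 1)) (zetaR s / 2 ^ s) := by
    simpa only [hf_odd] using hf.div_const (2 ^ s)
  obtain ⟨E, heven⟩ : Summable (fun m => f (2 * m)) :=
    hf.summable.comp_injective (mul_right_injective₀ two_ne_zero)
  have hE : E + zetaR s / 2 ^ s = zetaR s := (heven.even_add_odd hodd).unique hf
  have heta : HasSum (fun n : ℕ => (-1 : ℝ) ^ n / ((n : ℝ) + 1) ^ s) (E + -(zetaR s / 2 ^ s)) := by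
    refine HasSum.even_add_odd ?_ ?_
    · simpa [pow_mul, f] using heven
    · simpa [pow_succ, pow_mul, f, neg_div] using hodd.neg
  rw [etaR, heta.tsum_eq]
  linear_combination hE

lemma zetaR_two_mul {k : ℕ} (hk : k ≠ 0) :
    zetaR (2 * k) = (-1 : ℝ) ^ (k + 1) * 2 ^ (2 * k - 1) * π ^ (2 * k) *
        bernoulli (2 * k) / (2 * k).factorial := by
  have h := (hasSum_nat_add_iff' 1).mpr (hasSum_zeta_nat hk)
  simp only [Finset.sum_range_one, Nat.cast_zero, zero_pow (by omega : 2 * k ≠ 0), div_zero,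
    sub_zero, Nat.cast_add, Nat.cast_one] at h
  exact (hasSum_zetaR (by omega)).unique h

section Bernoulli

open PowerSeries Finset

lemma rescale_two_bernoulliPowerSeries_mul_exp :
    rescale (2 : ℚ) (bernoulliPowerSeries ℚ) * exp ℚ
      = C (2 : ℚ) * bernoulliPowerSeries ℚ - rescale (2 : ℚ) (bernoulliPowerSeries ℚ) := by
  have hexp : exp ℚ - 1 ≠ 0 := fun h => by simpa [coeff_exp] using congrArg (coeff 1) h
  have hB := bernoulliPowerSeries_mul_exp_sub_one ℚ
  have hB2 : rescale (2 : ℚ) (bernoulliPowerSeries ℚ) * (exp ℚ ^ 2 - 1) = C (2 : ℚ) * X := by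
    have h := congrArg (rescale (2 : ℚ)) hB
    rwa [map_mul, map_sub, map_one, rescale_X, ← Nat.cast_ofNat, ← exp_pow_eq_rescale_exp] at h
  refine mul_right_cancel₀ hexp ?_
  linear_combination hB2 - C (2 : ℚ) * hB

lemma sum_range_choose_mul_two_pow_mul_bernoulli (n : ℕ) :
    ∑ j ∈ range (n + 1), (n.choose j : ℚ) * 2 ^ j * bernoulli j = (2 - 2 ^ n) * bernoulli n := by
  have h := congrArg (coeff n) rescale_two_bernoulliPowerSeries_mul_exp
  rw [coeff_mul, map_sub, Nat.sum_antidiagonal_eq_sum_range_succ_mk] at h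
  simp only [coeff_rescale, coeff_C_mul, bernoulliPowerSeries, coeff_mk, coeff_exp,
    Algebra.algebraMap_self, RingHom.id_apply] at h
  have hterm : ∀ j ∈ range (n + 1), (n.choose j : ℚ) * 2 ^ j * bernoulli j
      = n.factorial * (2 ^ j * (bernoulli j / j.factorial) * (1 / (n - j).factorial)) := by
    intro j hj
    rw [Nat.cast_choose ℚ (mem_range_succ_iff.mp hj)]
    field_simp
  rw [sum_congr rfl hterm, ← mul_sum, h]
  field_simp

lemma sum_range_two_mul_add_two {M : Type*} [AddCommMonoid M] (f : ℕ → M) (p : ℕ) :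
    ∑ j ∈ range (2 * p + 2), f j = f 0 + f 1 + ∑ k ∈ Icc 1 p, (f (2 * k) + f (2 * k + 1)) := by
  induction p with
  | zero => simp [sum_range_succ]
  | succ p ih =>
    rw [show 2 * (p + 1) + 2 = 2 * p + 2 + 1 + 1 by ring, sum_range_succ, sum_range_succ, ih,
      sum_Icc_succ_top (by omega), add_assoc, add_assoc]
    rfl

lemma sum_Icc_choose_mul_bernoulli_even (p : ℕ) (hp : 1 ≤ p) :
    ∑ k ∈ Icc 1 p, ((2 * p + 1).choose (2 * k) : ℚ) * ((2 ^ (2 * k) - 2) * bernoulli (2 * k))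
      = 1 := by
  set n := 2 * p + 1
  set g : ℕ → ℚ := fun j => (n.choose j : ℚ) * ((2 ^ j - 2) * bernoulli j)
  have hBn : bernoulli n = 0 := bernoulli_eq_zero_of_odd (odd_two_mul_add_one p) (by omega)
  have hsum : ∑ j ∈ range (n + 1), g j = 0 := by
    have h1 : ∑ j ∈ range (n + 1), (n.choose j : ℚ) * bernoulli j = 0 := by
      rw [sum_range_succ, sum_bernoulli, if_neg (by omega), hBn, mul_zero, add_zero]
    have hg : ∀ j, g j = (n.choose j : ℚ) * 2 ^ j * bernoulli j - 2 * (n.choose j * bernoulli j) :=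
      fun j => by ring
    simp only [hg, sum_sub_distrib, ← mul_sum, sum_range_choose_mul_two_pow_mul_bernoulli, h1, hBn]
    ring
  have hodd : ∀ k ∈ Icc 1 p, g (2 * k) + g (2 * k + 1) = g (2 * k) := fun k hk => by
    have : bernoulli (2 * k + 1) = 0 :=
      bernoulli_eq_zero_of_odd (odd_two_mul_add_one k) (by simp at hk; omega)
    simp [g, this]
  rw [show n + 1 = 2 * p + 2 by omega, sum_range_two_mul_add_two, sum_congr rfl hodd] at hsum
  simp only [g, Nat.choose_zero_right, bernoulli_zero] at hsum
  linear_combination hsum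

end Bernoulli

lemma A_eq_bernoulli {k : ℕ} (hk : k ≠ 0) :
    A k = (-1 : ℝ) ^ (k - 1) * ((2 ^ (2 * k) - 2) * bernoulli (2 * k)) / (2 * (2 * k).factorial) := by
  have h2 : (2 : ℝ) ^ (2 * k) = 2 * 2 ^ (2 * k - 1) := by rw [← pow_succ']; congr 1; omega
  have hsign : (-1 : ℝ) ^ (k + 1) = (-1) ^ (k - 1) := by
    rw [show k + 1 = k - 1 + 2 by omega, pow_add, neg_one_sq, mul_one]
  rw [A, etaR_eq_zetaR (by omega), zetaR_two_mul hk, hsign, h2]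
  field_simp

lemma neg_one_pow_mul_factorial_div_mul_A (p k : ℕ) (hk : k ≠ 0) (hkp : k ≤ p) :
    (-1 : ℝ) ^ (k - 1) * ((2 * p).factorial / (2 * p + 1 - 2 * k).factorial) * A k
      = ((2 * p + 1).choose (2 * k)) * ((2 ^ (2 * k) - 2) * bernoulli (2 * k))
        / (2 * (2 * p + 1)) := by
  rw [A_eq_bernoulli hk, Nat.cast_choose ℝ (by omega), Nat.factorial_succ]
  have hsign : ((-1 : ℝ) ^ (k - 1)) ^ 2 = 1 := by
    rw [← pow_mul]; exact Even.neg_one_pow ⟨k - 1, by ring⟩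
  push_cast
  field_simp
  linear_combination (2 ^ (2 * k) - 2) * (bernoulli (2 * k) : ℝ) * hsign

theorem stmt3 (p : ℕ) (hp : 2 ≤ p) :
    A p = ((-1 : ℝ) ^ (p - 1) / ((2 * p).factorial : ℝ)) *
        (1 / (2 * (2 * (p : ℝ) + 1))
          - ∑ k ∈ Finset.Icc 1 (p - 1), (-1 : ℝ) ^ (k - 1) *
              (((2 * p).factorial : ℝ) / ((2 * p + 1 - 2 * k).factorial : ℝ)) * A k)
      ∧ A 1 = 1 / 12 := by
  refine ⟨?_, ?_⟩
  · obtain ⟨q, rfl⟩ : ∃ q, p = q + 1 := ⟨p - 1, by omega⟩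
    have hsum := sum_Icc_choose_mul_bernoulli_even (q + 1) (by omega)
    rw [Finset.sum_Icc_succ_top (by omega), Nat.choose_succ_self_right] at hsum
    have hterm := fun k (hk : k ∈ Finset.Icc 1 q) =>
      neg_one_pow_mul_factorial_div_mul_A (q + 1) k (by simp at hk; omega) (by simp at hk; omega)
    rw [Nat.add_sub_cancel, Finset.sum_congr rfl hterm, ← Finset.sum_div, A_eq_bernoulli (by omega),
      Nat.add_sub_cancel]
    have hsumR : (∑ k ∈ Finset.Icc 1 q, ((2 * (q + 1) + 1).choose (2 * k) : ℝ) *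
        ((2 ^ (2 * k) - 2) * bernoulli (2 * k))) = 1 - (2 * (q + 1) + 1) *
        ((2 ^ (2 * (q + 1)) - 2) * bernoulli (2 * (q + 1))) := by
      rw [eq_sub_iff_add_eq]; exact_mod_cast hsum
    push_cast at hsumR ⊢
    rw [hsumR]
    field_simp
    ring
  · rw [A_eq_bernoulli one_ne_zero]
    norm_num [bernoulli, bernoulli'_two, Nat.factorial]
end

section
/- For every natural number p, β(2p+1)/π^{2p+1} is a rational number, where β(s) = Σ_{m=0}^∞ (−1)^m/(2m+1)^s is the Dirichlet beta function. -/
/-!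
For `k ≥ 1` the Fourier expansion of the odd Bernoulli polynomial `B_{2k+1}` on `[0, 1]` reads
`∑ sin (2πnx) / n^(2k+1) = (-1)^(k+1) (2π)^(2k+1) / (2 (2k+1)!) · B_{2k+1}(x)`.
At `x = 1/4` the even terms vanish and the odd term `n = 2m+1` carries the sign `(-1)^m`, so
`β(2k+1)` is `π^(2k+1)` times the rational number `(-1)^(k+1) 2^(2k) B_{2k+1}(1/4) / (2k+1)!`.
-/

open scoped BigOperators Nat
open Real

lemma not_summable_neg_one_pow_div_two_mul_add_one :
    ¬ Summable (fun m : ℕ => (-1 : ℝ) ^ m / (2 * (m : ℝ) + 1)) := by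
  rw [← summable_abs_iff]
  intro h
  refine (Real.summable_one_div_nat_add_rpow (1 / 2) 1).not.mpr (lt_irrefl 1) ?_
  refine (h.mul_left 2).congr fun m => ?_
  rw [abs_div, abs_pow, abs_neg, abs_one, one_pow, abs_of_pos (by positivity),
    abs_of_pos (by positivity), Real.rpow_one]
  field_simp

/-- The Leibniz series `β(1) = π/4` converges only conditionally, so `tsum` gives it the junk
value `0`. -/
lemma betaR_one : betaR 1 = 0 := by
  simpa [betaR] using tsum_eq_zero_of_not_summable not_summable_neg_one_pow_div_two_mul_add_one

lemma hasSum_odd_of_eq_zero_even {α : Type*} [AddCommMonoid α] [TopologicalSpace α]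
    {f : ℕ → α} {a : α} (hf : ∀ m, f (2 * m) = 0) (h : HasSum f a) :
    HasSum (fun m => f (2 * m + 1)) a := by
  have hinj : Function.Injective (fun m : ℕ => 2 * m + 1) := fun a b h => by simp_all
  refine (hinj.hasSum_iff fun n hn => ?_).mpr h
  obtain ⟨m, rfl | rfl⟩ := Nat.even_or_odd' n
  · exact hf m
  · exact absurd ⟨m, rfl⟩ hn

lemma sin_two_pi_mul_natCast_mul_quarter_even (m : ℕ) :
    sin (2 * π * ((2 * m : ℕ) : ℝ) * (1 / 4)) = 0 := by
  rw [← Real.sin_nat_mul_pi m]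
  push_cast
  ring_nf

lemma sin_two_pi_mul_natCast_mul_quarter_odd (m : ℕ) :
    sin (2 * π * ((2 * m + 1 : ℕ) : ℝ) * (1 / 4)) = (-1) ^ m := by
  have h : 2 * π * ((2 * m + 1 : ℕ) : ℝ) * (1 / 4) = m * π - -(π / 2) := by
    push_cast
    ring
  rw [h, Real.sin_nat_mul_pi_sub, Real.sin_neg, Real.sin_pi_div_two]
  ring

lemma hasSum_neg_one_pow_div_two_mul_add_one_pow {k : ℕ} (hk : k ≠ 0) :
    HasSum (fun m : ℕ => (-1 : ℝ) ^ m / (2 * (m : ℝ) + 1) ^ (2 * k + 1))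
      ((-1 : ℝ) ^ (k + 1) * (2 * π) ^ (2 * k + 1) / 2 / (2 * k + 1)! *
        bernoulliFun (2 * k + 1) (1 / 4)) := by
  have h := hasSum_one_div_nat_pow_mul_sin hk (x := 1 / 4) ⟨by norm_num, by norm_num⟩
  refine (hasSum_odd_of_eq_zero_even (fun m => ?_) h).congr_fun fun m => ?_
  · rw [sin_two_pi_mul_natCast_mul_quarter_even, mul_zero]
  · rw [sin_two_pi_mul_natCast_mul_quarter_odd]
    push_cast
    ring

lemma bernoulliFun_ratCast (k : ℕ) (q : ℚ) :
    bernoulliFun k q = ((Polynomial.bernoulli k).eval q : ℚ) := by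
  rw [bernoulliFun, ← eq_ratCast (algebraMap ℚ ℝ), Polynomial.eval_map_algebraMap,
    Polynomial.aeval_algebraMap_apply_eq_algebraMap_eval, eq_ratCast]

lemma betaR_two_mul_add_one {k : ℕ} (hk : k ≠ 0) :
    betaR (2 * k + 1) = π ^ (2 * k + 1) * (((-1) ^ (k + 1) * 2 ^ (2 * k + 1) / 2 / (2 * k + 1)! *
      (Polynomial.bernoulli (2 * k + 1)).eval (1 / 4) : ℚ) : ℝ) := by
  have h14 : (1 / 4 : ℝ) = ((1 / 4 : ℚ) : ℝ) := by norm_num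
  rw [betaR, (hasSum_neg_one_pow_div_two_mul_add_one_pow hk).tsum_eq, h14, bernoulliFun_ratCast]
  push_cast
  ring

theorem stmt18 (p : ℕ) : ∃ q : ℚ, betaR (2 * p + 1) / π ^ (2 * p + 1) = (q : ℝ) := by
  rcases eq_or_ne p 0 with rfl | hp
  · exact ⟨0, by simp [betaR_one]⟩
  · rw [betaR_two_mul_add_one hp, mul_div_cancel_left₀ _ (pow_ne_zero _ Real.pi_ne_zero)]
    exact ⟨_, rfl⟩
end
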